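/- Let n ≥ 2 be even and let R = Z₂[a,b]/(a^{n+1}, b²) be graded with deg a = deg b = m for some m ≥ 1. Then every degree-preserving Z₂-algebra automorphism of R is the identity. (Indeed, the three nonzero elements a, b, a+b of degree m have pairwise distinct nilpotency indices n+1, 2 and n+2, so any graded automorphism fixes each of them.) -/

import Mathlib

open MvPolynomial

/-- The ring `Z₂[a,b]/(a^{n+1}, b²)`. -/
noncomputable abbrev PSRing (n : ℕ) : Type :=
  MvPolynomial (Fin 2) (ZMod 2) ⧸
    (Ideal.span {(X 0 : MvPolynomial (Fin 2) (ZMod 2)) ^ (n + 1), (X 1) ^ 2})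

/-- The class `a` in `Z₂[a,b]/(a^{n+1}, b²)`. -/
noncomputable def aCl (n : ℕ) : PSRing n := Ideal.Quotient.mk _ (X 0)

/-- The class `b` in `Z₂[a,b]/(a^{n+1}, b²)`. -/
noncomputable def bCl (n : ℕ) : PSRing n := Ideal.Quotient.mk _ (X 1)

/-- The degree-`k` piece of `Z₂[a,b]/(a^{n+1}, b²)` for the grading with
`deg a = deg b = m`: the `ℤ₂`-span of the monomials `aⁱbʲ` with `m(i+j) = k`. -/
noncomputable def psPiece (n m k : ℕ) : Set (PSRing n) :=
  ↑(Submodule.span (ZMod 2)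
    {r : PSRing n | ∃ i j : ℕ, m * (i + j) = k ∧ r = aCl n ^ i * bCl n ^ j})

/-- A degree-preserving (`ℤ₂`-algebra) automorphism of `Z₂[a,b]/(a^{n+1}, b²)` for the
grading with `deg a = deg b = m`. -/
def IsGradedAut (n m : ℕ) (φ : PSRing n ≃+* PSRing n) : Prop :=
  ∀ k : ℕ, φ '' psPiece n m k = psPiece n m k

/-! Since `(a^{n+1}, b²)` is a monomial ideal, `aⁱbʲ` vanishes exactly when `i > n` or `j ≥ 2`.
The degree-`m` piece is `{0, a, b, a + b}`, and a graded automorphism permutes its nonzero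
elements while preserving nilpotency. In characteristic two `(a + b)² = a² ≠ 0`, so `b` is the
only one squaring to zero and is fixed. Since `n` is even, `(a + b)^{n+1} = aⁿb ≠ 0` while
`a^{n+1} = 0`, so `a` is fixed as well; an automorphism fixing both generators is the identity. -/

theorem aCl_pow_mul_bCl_pow_eq_zero_iff (n i j : ℕ) :
    aCl n ^ i * bCl n ^ j = 0 ↔ n + 1 ≤ i ∨ 2 ≤ j := by
  have hI : Ideal.span {(X 0 : MvPolynomial (Fin 2) (ZMod 2)) ^ (n + 1), (X 1) ^ 2} =
      Ideal.span ((fun s => monomial s (1 : ZMod 2)) ''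
        {Finsupp.single 0 (n + 1), Finsupp.single 1 2}) := by
    simp only [Set.image_insert_eq, Set.image_singleton, X_pow_eq_monomial]
  have hmono : aCl n ^ i * bCl n ^ j =
      Ideal.Quotient.mk _ (monomial (Finsupp.single 0 i + Finsupp.single 1 j) (1 : ZMod 2)) := by
    simp only [aCl, bCl, ← map_pow, ← map_mul, X_pow_eq_monomial, monomial_mul, mul_one]
  rw [hmono, Ideal.Quotient.eq_zero_iff_mem, hI, mem_ideal_span_monomial_image]
  simp [support_monomial, Finsupp.single_le_iff, -Finsupp.single_add]

theorem aCl_pow_eq_zero_iff (n i : ℕ) : aCl n ^ i = 0 ↔ n + 1 ≤ i := by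
  simpa using aCl_pow_mul_bCl_pow_eq_zero_iff n i 0

theorem bCl_sq (n : ℕ) : bCl n ^ 2 = 0 := by
  simpa using aCl_pow_mul_bCl_pow_eq_zero_iff n 0 2

theorem bCl_ne_zero (n : ℕ) : bCl n ≠ 0 := by
  simpa using (aCl_pow_mul_bCl_pow_eq_zero_iff n 0 1).not

instance (n : ℕ) : Nontrivial (PSRing n) := ⟨⟨bCl n, 0, bCl_ne_zero n⟩⟩

instance (n : ℕ) : CharP (PSRing n) 2 := charP_of_injective_algebraMap' (ZMod 2) 2

theorem aCl_sq_ne_zero {n : ℕ} (hn : 2 ≤ n) : aCl n ^ 2 ≠ 0 := by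
  rw [Ne, aCl_pow_eq_zero_iff]
  omega

theorem aCl_add_bCl_sq (n : ℕ) : (aCl n + bCl n) ^ 2 = aCl n ^ 2 := by
  rw [CharTwo.add_sq, bCl_sq, add_zero]

theorem aCl_add_bCl_pow_succ_of_even {n : ℕ} (hn : Even n) :
    (aCl n + bCl n) ^ (n + 1) = aCl n ^ n * bCl n := by
  obtain ⟨t, rfl⟩ := hn
  rw [pow_succ, ← two_mul, pow_mul, aCl_add_bCl_sq, ← pow_mul, mul_add, ← pow_succ,
    (aCl_pow_eq_zero_iff _ _).2 le_rfl, zero_add]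

theorem psPiece_self (n : ℕ) {m : ℕ} (hm : 0 < m) :
    psPiece n m m = {0, aCl n, bCl n, aCl n + bCl n} := by
  have hgen : {r : PSRing n | ∃ i j : ℕ, m * (i + j) = m ∧ r = aCl n ^ i * bCl n ^ j} =
      {aCl n, bCl n} := by
    ext r
    simp only [Set.mem_ofPred_eq, Set.mem_insert_iff, Set.mem_singleton_iff]
    constructor
    · rintro ⟨i, j, hij, rfl⟩
      have : i + j = 1 := by simpa [hm.ne'] using hij
      rcases (by omega : i = 1 ∧ j = 0 ∨ i = 0 ∧ j = 1) with ⟨rfl, rfl⟩ | ⟨rfl, rfl⟩ <;> simp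
    · rintro (rfl | rfl)
      exacts [⟨1, 0, by simp, by simp⟩, ⟨0, 1, by simp, by simp⟩]
  ext x
  simp only [psPiece, hgen, SetLike.mem_coe, Submodule.mem_span_pair, Set.mem_insert_iff,
    Set.mem_singleton_iff]
  constructor
  · rintro ⟨c, d, rfl⟩
    have hZ2 : ∀ c : ZMod 2, c = 0 ∨ c = 1 := by decide
    rcases hZ2 c with rfl | rfl <;> rcases hZ2 d with rfl | rfl <;> simp
  · rintro (rfl | rfl | rfl | rfl)
    exacts [⟨0, 0, by simp⟩, ⟨1, 0, by simp⟩, ⟨0, 1, by simp⟩, ⟨1, 1, by simp⟩]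

theorem PSRing.ringHom_ext {n : ℕ} {S : Type*} [Semiring S] {f g : PSRing n →+* S}
    (ha : f (aCl n) = g (aCl n)) (hb : f (bCl n) = g (bCl n)) : f = g := by
  refine Ideal.Quotient.ringHom_ext (MvPolynomial.ringHom_ext (fun r => ?_) fun i => ?_)
  · exact RingHom.congr_fun (RingHom.ext_zmod ((f.comp _).comp C) ((g.comp _).comp C)) r
  · fin_cases i
    exacts [ha, hb]

namespace IsGradedAut

variable {n m : ℕ} {φ : PSRing n ≃+* PSRing n}

theorem apply_mem_psPiece (hφ : IsGradedAut n m φ) {k : ℕ} {x : PSRing n}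
    (hx : x ∈ psPiece n m k) : φ x ∈ psPiece n m k :=
  hφ k ▸ Set.mem_image_of_mem φ hx

theorem apply_aCl (hφ : IsGradedAut n m φ) (hn : 2 ≤ n) (hne : Even n) (hm : 0 < m) :
    φ (aCl n) = aCl n := by
  have hmem := hφ.apply_mem_psPiece (k := m) (x := aCl n) (by simp [psPiece_self n hm])
  simp only [psPiece_self n hm, Set.mem_insert_iff, Set.mem_singleton_iff] at hmem
  rcases hmem with h | h | h | h
  · refine absurd ((map_eq_zero_iff φ φ.injective).1 h) ?_
    simpa using (aCl_pow_eq_zero_iff n 1).not.2 (by omega)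
  · exact h
  · refine absurd ?_ (aCl_sq_ne_zero hn)
    rw [← map_eq_zero_iff φ φ.injective, map_pow, h, bCl_sq]
  · refine absurd ?_ ((aCl_pow_mul_bCl_pow_eq_zero_iff n n 1).not.2 (by omega))
    rw [pow_one, ← aCl_add_bCl_pow_succ_of_even hne, ← h, ← map_pow,
      (aCl_pow_eq_zero_iff _ _).2 le_rfl, map_zero]

theorem apply_bCl (hφ : IsGradedAut n m φ) (hn : 2 ≤ n) (hm : 0 < m) :
    φ (bCl n) = bCl n := by
  have hmem := hφ.apply_mem_psPiece (k := m) (x := bCl n) (by simp [psPiece_self n hm])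
  have hsq : φ (bCl n) ^ 2 = 0 := by rw [← map_pow, bCl_sq, map_zero]
  simp only [psPiece_self n hm, Set.mem_insert_iff, Set.mem_singleton_iff] at hmem
  rcases hmem with h | h | h | h
  · exact absurd ((map_eq_zero_iff φ φ.injective).1 h) (bCl_ne_zero n)
  · exact absurd (h ▸ hsq) (aCl_sq_ne_zero hn)
  · exact h
  · exact absurd (aCl_add_bCl_sq n ▸ h ▸ hsq) (aCl_sq_ne_zero hn)

end IsGradedAut

/-- Let `n ≥ 2` be even and grade `R = Z₂[a,b]/(a^{n+1}, b²)` by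
`deg a = deg b = m` (`m ≥ 1`).  Then every degree-preserving `ℤ₂`-algebra automorphism
of `R` is the identity. -/
theorem gradedAut_eq_id_of_even (n m : ℕ) (hn : 2 ≤ n) (hne : Even n) (hm : 1 ≤ m) :
    ∀ φ : PSRing n ≃+* PSRing n, IsGradedAut n m φ → φ = RingEquiv.refl (PSRing n) :=
  fun _ hφ => RingEquiv.toRingHom_injective <|
    PSRing.ringHom_ext (hφ.apply_aCl hn hne hm) (hφ.apply_bCl hn hm)
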